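/- arXiv:1811.05876 — 6 statements merged into one kernel-verified Lean document; each statement's English description precedes it below -/
import Mathlib

section
/- In a regular multi-pointed category (C, N) with N-kernels, every star (λ₁, λ₂) : X ⇉ Y factorises, uniquely up to isomorphism, as a regular epimorphism e : X → Z followed by a monic star (μ₁, μ₂) : Z ⇉ Y, i.e. λ₁ = μ₁ e, λ₂ = μ₂ e with (μ₁, μ₂) jointly monomorphic and μ₁ ∈ N. -/
open CategoryTheory CategoryTheory.Limits

universe v u

namespace StarReg

variable {C : Type u} [Category.{v} C]

/-- An ideal of morphisms in the sense of Ehresmann. -/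
def IsIdealClass (N : MorphismProperty C) : Prop :=
  (∀ ⦃X Y Z : C⦄ (f : X ⟶ Y) (g : Y ⟶ Z), N f → N (f ≫ g)) ∧
  (∀ ⦃X Y Z : C⦄ (f : X ⟶ Y) (g : Y ⟶ Z), N g → N (f ≫ g))

/-- `k` is an `N`-kernel of `f`. -/
def IsNKernel (N : MorphismProperty C) {K X Y : C} (k : K ⟶ X) (f : X ⟶ Y) : Prop :=
  N (k ≫ f) ∧ ∀ ⦃L : C⦄ (g : L ⟶ X), N (g ≫ f) → ∃! μ : L ⟶ K, μ ≫ k = g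

def HasNKernels (N : MorphismProperty C) : Prop :=
  ∀ ⦃X Y : C⦄ (f : X ⟶ Y), ∃ (K : C) (k : K ⟶ X), IsNKernel N k f

/-- Every morphism factors as a regular epimorphism followed by a monomorphism. -/
def RegEpiMonoFactorisations (C : Type u) [Category.{v} C] : Prop :=
  ∀ ⦃X Y : C⦄ (f : X ⟶ Y), ∃ (Z : C) (e : X ⟶ Z) (m : Z ⟶ Y),
    Nonempty (RegularEpi e) ∧ Mono m ∧ e ≫ m = f

/-- Regular epimorphisms are stable under pullback. -/
def RegEpisPullbackStable (C : Type u) [Category.{v} C] : Prop :=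
  ∀ ⦃P X Y Z : C⦄ (fst : P ⟶ X) (snd : P ⟶ Y) (f : X ⟶ Z) (g : Y ⟶ Z),
    IsPullback fst snd f g → Nonempty (RegularEpi g) → Nonempty (RegularEpi fst)

/-- A star: a pair of parallel morphisms whose first component lies in `N`. -/
structure Star (N : MorphismProperty C) (X : C) where
  T : C
  a : T ⟶ X
  b : T ⟶ X
  ha : N a

/-- A monic star: the pair is jointly monomorphic. -/
def Star.Monic {N : MorphismProperty C} {X : C} (s : Star N X) : Prop :=
  ∀ ⦃W : C⦄ (u v : W ⟶ s.T), u ≫ s.a = v ≫ s.a → u ≫ s.b = v ≫ s.b → u = v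

/-- `s` is the kernel star of `f`. -/
def IsKernelStar {N : MorphismProperty C} {X Y : C} (f : X ⟶ Y) (s : Star N X) : Prop :=
  s.a ≫ f = s.b ≫ f ∧
  ∀ t : Star N X, t.a ≫ f = t.b ≫ f →
    ∃! u : t.T ⟶ s.T, u ≫ s.a = t.a ∧ u ≫ s.b = t.b

/-- `t` is the (regular epi, monic star) image of the star `s` along `f`. -/
def IsImageFact {N : MorphismProperty C} {X Y : C} (f : X ⟶ Y) (s : Star N X)
    (t : Star N Y) : Prop :=
  t.Monic ∧ ∃ e : s.T ⟶ t.T,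
    Nonempty (RegularEpi e) ∧ e ≫ t.a = s.a ≫ f ∧ e ≫ t.b = s.b ≫ f

/-- `f` is a coequaliser of the star `s`. -/
def IsStarCoequalizer {N : MorphismProperty C} {X Q : C} (s : Star N X) (f : X ⟶ Q) : Prop :=
  s.a ≫ f = s.b ≫ f ∧
  ∀ ⦃W : C⦄ (h : X ⟶ W), s.a ≫ h = s.b ≫ h → ∃! u : Q ⟶ W, f ≫ u = h

/-- `s` is the star `Δ*_X` of the discrete relation on `X`. -/
def IsDeltaStar {N : MorphismProperty C} {X : C} (s : Star N X) : Prop :=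
  s.a = s.b ∧ IsNKernel N s.a (𝟙 X)

def RegEpisAreStarCoequalizers (N : MorphismProperty C) : Prop :=
  ∀ ⦃X Y : C⦄ (f : X ⟶ Y), Nonempty (RegularEpi f) →
    ∃ s : Star N X, IsStarCoequalizer s f

/-- A star-regular category: regular multi-pointed with `N`-kernels, every regular
epimorphism a coequaliser of a star. -/
def StarRegular (N : MorphismProperty C) : Prop :=
  IsIdealClass N ∧ HasNKernels N ∧ RegEpiMonoFactorisations C ∧
    RegEpisPullbackStable C ∧ RegEpisAreStarCoequalizers N

def HasKernelStarCoequalizers (N : MorphismProperty C) : Prop :=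
  ∀ ⦃X Y : C⦄ (f : X ⟶ Y) (s : Star N X), IsKernelStar f s →
    ∃ (Q : C) (q : X ⟶ Q), IsStarCoequalizer s q

/-- `f` is saturating: the image of `Δ*` along `f` is `Δ*`. -/
def Saturating (N : MorphismProperty C) {X Y : C} (f : X ⟶ Y) : Prop :=
  ∀ (s : Star N X) (t : Star N Y), IsDeltaStar s → IsImageFact f s t → IsDeltaStar t

/-- The diamond `e ≫ g = f ≫ h` is right saturated: `f(E*) = H*`. -/
def RightSaturated (N : MorphismProperty C) {X Y Z W : C}
    (e : X ⟶ Z) (f : X ⟶ Y) (_g : Z ⟶ W) (h : Y ⟶ W) : Prop :=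
  ∀ (s : Star N X) (t : Star N Y), IsKernelStar e s → IsImageFact f s t → IsKernelStar h t

/-- The diamond `e ≫ g = f ≫ h` is left saturated: `e(F*) = G*`. -/
def LeftSaturated (N : MorphismProperty C) {X Y Z W : C}
    (e : X ⟶ Z) (f : X ⟶ Y) (g : Z ⟶ W) (_h : Y ⟶ W) : Prop :=
  ∀ (s : Star N X) (t : Star N Z), IsKernelStar f s → IsImageFact e s t → IsKernelStar g t

/-- `s` is a kernel star (of some morphism). -/
def IsAKernelStar {N : MorphismProperty C} {X : C} (s : Star N X) : Prop :=
  ∃ (W : C) (w : X ⟶ W), IsKernelStar w s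

/-- Inclusion of stars on the same object. -/
def StarLE {N : MorphismProperty C} {X : C} (s t : Star N X) : Prop :=
  ∃ m : s.T ⟶ t.T, m ≫ t.a = s.a ∧ m ≫ t.b = s.b

/-- Property (*): images along coequalisers of smaller kernel stars of kernel stars are
kernel stars. -/
def PropertyStar (N : MorphismProperty C) : Prop :=
  ∀ ⦃A Q : C⦄ (F G : Star N A) (f : A ⟶ Q),
    IsKernelStar f F → IsStarCoequalizer F f → IsAKernelStar G → StarLE F G →
    ∀ t : Star N Q, IsImageFact f G t → IsAKernelStar t

/-- `σ` (with comparison `j`) is the star-pullback of `τ` along `g`. -/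
def IsStarPullback {N : MorphismProperty C} {X Y : C} (g : X ⟶ Y) (τ : Star N Y)
    (σ : Star N X) (j : σ.T ⟶ τ.T) : Prop :=
  σ.a ≫ g = j ≫ τ.a ∧ σ.b ≫ g = j ≫ τ.b ∧
  ∀ (ρ : Star N X) (w : ρ.T ⟶ τ.T), ρ.a ≫ g = w ≫ τ.a → ρ.b ≫ g = w ≫ τ.b →
    ∃! h : ρ.T ⟶ σ.T, h ≫ σ.a = ρ.a ∧ h ≫ σ.b = ρ.b ∧ h ≫ j = w

def HasRegEpiPushouts (C : Type u) [Category.{v} C] : Prop :=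
  ∀ ⦃X Y Z : C⦄ (f : X ⟶ Y) (g : X ⟶ Z), Nonempty (RegularEpi f) → Nonempty (RegularEpi g) →
    ∃ (W : C) (p : Y ⟶ W) (q : Z ⟶ W), IsPushout f g p q

end StarReg

/-!
Factor `⟨λ₁, λ₂⟩ : X ⟶ Y × Y` as a regular epi `e` followed by a mono `m`; the components of `m`
form a jointly monic pair, and uniqueness is that of (strong epi, mono) factorisations. The one
point that needs the pointed structure is `N (m ≫ fst)`: the `N`-kernel `k` of `𝟙 Y` is a mono
through which exactly the morphisms of `N` factor, so the square `u ≫ k = e ≫ (m ≫ fst)` coming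
from `λ₁ ∈ N` has a diagonal filler, and `m ≫ fst` factors through `k`.
-/

namespace StarReg

variable {C : Type u} [Category.{v} C] {N : MorphismProperty C}

section NKernelOfIdentity

variable {K Y : C} {k : K ⟶ Y}

lemma IsNKernel.mem_of_id (hk : IsNKernel N k (𝟙 Y)) : N k := by
  simpa using hk.1

lemma IsNKernel.mono_of_id (hN : IsIdealClass N) (hk : IsNKernel N k (𝟙 Y)) : Mono k :=
  ⟨fun p q h => (hk.2 (p ≫ k) (by simpa using hN.2 p k hk.mem_of_id)).unique rfl h.symm⟩

lemma IsNKernel.exists_comp_eq_of_id (hk : IsNKernel N k (𝟙 Y)) {X : C} {f : X ⟶ Y}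
    (hf : N f) : ∃ u : X ⟶ K, u ≫ k = f :=
  (hk.2 f (by simpa using hf)).exists

end NKernelOfIdentity

lemma mem_of_strongEpi_comp (hN : IsIdealClass N) (hker : HasNKernels N) {X Z Y : C}
    (e : X ⟶ Z) [StrongEpi e] {f : Z ⟶ Y} (h : N (e ≫ f)) : N f := by
  obtain ⟨K, k, hk⟩ := hker (𝟙 Y)
  have := hk.mono_of_id hN
  obtain ⟨u, hu⟩ := hk.exists_comp_eq_of_id h
  have sq : CommSq u e k f := ⟨hu⟩
  rw [← sq.fac_right]
  exact hN.2 _ _ hk.mem_of_id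

lemma mono_prod_lift_iff {Z Y₁ Y₂ : C} [HasBinaryProduct Y₁ Y₂] {f : Z ⟶ Y₁} {g : Z ⟶ Y₂} :
    Mono (prod.lift f g) ↔
      ∀ ⦃W : C⦄ (u v : W ⟶ Z), u ≫ f = v ≫ f → u ≫ g = v ≫ g → u = v := by
  refine ⟨fun _ W u v hf hg => ?_, fun h => ⟨fun u v huv => h u v ?_ ?_⟩⟩
  · rw [← cancel_mono (prod.lift f g)]
    ext <;> simp [hf, hg]
  · simpa [prod.lift_fst] using huv =≫ prod.fst
  · simpa [prod.lift_snd] using huv =≫ prod.snd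

lemma exists_iso_of_strongEpi_mono {X Y Z Z' : C} {e : X ⟶ Z} {m : Z ⟶ Y} {e' : X ⟶ Z'}
    {m' : Z' ⟶ Y} [StrongEpi e] [Mono m] [StrongEpi e'] [Mono m'] (h : e ≫ m = e' ≫ m') :
    ∃ i : Z ≅ Z', e ≫ i.hom = e' ∧ i.hom ≫ m' = m := by
  let F : StrongEpiMonoFactorisation (e ≫ m) := { I := Z, m := m, e := e }
  let F' : StrongEpiMonoFactorisation (e ≫ m) := { I := Z', m := m', e := e', fac := h.symm }
  exact ⟨IsImage.isoExt F.toMonoIsImage F'.toMonoIsImage,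
    IsImage.e_isoExt_hom F.toMonoIsImage F'.toMonoIsImage,
    IsImage.isoExt_hom_m F.toMonoIsImage F'.toMonoIsImage⟩

end StarReg

open CategoryTheory CategoryTheory.Limits StarReg in
theorem statement2_general {C : Type u} [Category.{v} C] (N : MorphismProperty C)
    (hfl : HasFiniteLimits C) (hN : IsIdealClass N) (hker : HasNKernels N)
    (hfac : RegEpiMonoFactorisations C)
    {X Y : C} (l₁ l₂ : X ⟶ Y) (hl : N l₁) :
    ∃ (Z : C) (e : X ⟶ Z) (μ₁ μ₂ : Z ⟶ Y),
      Nonempty (RegularEpi e) ∧ N μ₁ ∧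
      (∀ ⦃W : C⦄ (u v : W ⟶ Z), u ≫ μ₁ = v ≫ μ₁ → u ≫ μ₂ = v ≫ μ₂ → u = v) ∧
      e ≫ μ₁ = l₁ ∧ e ≫ μ₂ = l₂ ∧
      (∀ (Z' : C) (e' : X ⟶ Z') (μ₁' μ₂' : Z' ⟶ Y),
        Nonempty (RegularEpi e') → N μ₁' →
        (∀ ⦃W : C⦄ (u v : W ⟶ Z'), u ≫ μ₁' = v ≫ μ₁' → u ≫ μ₂' = v ≫ μ₂' → u = v) →
        e' ≫ μ₁' = l₁ → e' ≫ μ₂' = l₂ →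
        ∃ i : Z ≅ Z', e ≫ i.hom = e' ∧ i.hom ≫ μ₁' = μ₁ ∧ i.hom ≫ μ₂' = μ₂) := by
  obtain ⟨Z, e, m, ⟨hre⟩, hm, hem⟩ := hfac (prod.lift l₁ l₂)
  have := isRegularEpi_of_regularEpi hre
  have hm_eq : m = prod.lift (m ≫ prod.fst) (m ≫ prod.snd) := by
    ext <;> simp [prod.lift_fst, prod.lift_snd]
  have he₁ : e ≫ m ≫ prod.fst = l₁ := by simp [reassoc_of% hem, prod.lift_fst]
  have he₂ : e ≫ m ≫ prod.snd = l₂ := by simp [reassoc_of% hem, prod.lift_snd]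
  refine ⟨Z, e, m ≫ prod.fst, m ≫ prod.snd, ⟨hre⟩,
    mem_of_strongEpi_comp hN hker e (he₁ ▸ hl), mono_prod_lift_iff.1 (hm_eq ▸ hm), he₁, he₂, ?_⟩
  intro Z' e' μ₁' μ₂' ⟨hre'⟩ _ hμ' he₁' he₂'
  have := isRegularEpi_of_regularEpi hre'
  have := mono_prod_lift_iff.2 hμ'
  obtain ⟨i, hei, him⟩ := exists_iso_of_strongEpi_mono (m' := prod.lift μ₁' μ₂')
    (by rw [hem, prod.comp_lift, he₁', he₂'])
  exact ⟨i, hei, by simp [← him, prod.lift_fst], by simp [← him, prod.lift_snd]⟩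

open CategoryTheory CategoryTheory.Limits StarReg in
/-- In a regular multi-pointed category with N-kernels, every star factorises, uniquely up
to isomorphism, as a regular epimorphism followed by a monic star. -/
theorem statement2 {C : Type u} [Category.{v} C] (N : MorphismProperty C)
    (hfl : HasFiniteLimits C) (hN : IsIdealClass N) (hker : HasNKernels N)
    (hfac : RegEpiMonoFactorisations C) (hpb : RegEpisPullbackStable C)
    {X Y : C} (l₁ l₂ : X ⟶ Y) (hl : N l₁) :
    ∃ (Z : C) (e : X ⟶ Z) (μ₁ μ₂ : Z ⟶ Y),
      Nonempty (RegularEpi e) ∧ N μ₁ ∧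
      (∀ ⦃W : C⦄ (u v : W ⟶ Z), u ≫ μ₁ = v ≫ μ₁ → u ≫ μ₂ = v ≫ μ₂ → u = v) ∧
      e ≫ μ₁ = l₁ ∧ e ≫ μ₂ = l₂ ∧
      (∀ (Z' : C) (e' : X ⟶ Z') (μ₁' μ₂' : Z' ⟶ Y),
        Nonempty (RegularEpi e') → N μ₁' →
        (∀ ⦃W : C⦄ (u v : W ⟶ Z'), u ≫ μ₁' = v ≫ μ₁' → u ≫ μ₂' = v ≫ μ₂' → u = v) →
        e' ≫ μ₁' = l₁ → e' ≫ μ₂' = l₂ →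
        ∃ i : Z ≅ Z', e ≫ i.hom = e' ∧ i.hom ≫ μ₁' = μ₁ ∧ i.hom ≫ μ₂' = μ₂) :=
  statement2_general N hfl hN hker hfac l₁ l₂ hl
end

section
/- In a regular multi-pointed category C, the following are equivalent: (i) every regular epimorphism is saturating; (ii) every regular diamond in which the right edge is an identity (i.e. a commuting square f = g∘e with e, f, g regular epimorphisms and identity on the right) is right saturated. -/
open CategoryTheory CategoryTheory.Limits

universe v u

/-!
`Δ*_X` is the kernel star of `𝟙 X`, so saturation of `f` is right saturation of the diamond
`(𝟙, f, f, 𝟙)`. Conversely, let `E*` be the kernel star of `e` and `f = e ≫ g`. Then `Δ*_X ≤ E*`,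
so `Δ*_Y = f(Δ*_X) ≤ f(E*)`; and `f(E*)` is a monic star whose two legs agree, which forces it
to be `Δ*_Y`, the kernel star of `𝟙 Y`.
-/

namespace StarReg

variable {C : Type u} [Category.{v} C] {N : MorphismProperty C}

theorem isKernelStar_id_iff_isDeltaStar {X : C} (s : Star N X) :
    IsKernelStar (𝟙 X) s ↔ IsDeltaStar s := by
  simp only [IsKernelStar, IsDeltaStar, IsNKernel, Category.comp_id]
  constructor
  · rintro ⟨hab, hs⟩
    refine ⟨hab, s.ha, fun L g hg => ?_⟩
    obtain ⟨μ, ⟨hμa, -⟩, hμ⟩ := hs ⟨L, g, g, hg⟩ rfl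
    exact ⟨μ, hμa, fun ν hν => hμ ν ⟨hν, hab ▸ hν⟩⟩
  · rintro ⟨hab, -, hs⟩
    refine ⟨hab, fun t ht => ?_⟩
    obtain ⟨μ, hμa, hμ⟩ := hs t.a t.ha
    exact ⟨μ, ⟨hμa, hab ▸ ht ▸ hμa⟩, fun ν hν => hμ ν hν.1⟩

theorem exists_isDeltaStar (hker : HasNKernels N) (X : C) : ∃ d : Star N X, IsDeltaStar d := by
  obtain ⟨K, k, hk⟩ := hker (𝟙 X)
  exact ⟨⟨K, k, k, by simpa using hk.1⟩, rfl, hk⟩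

theorem IsKernelStar.starLE {X Y : C} {e : X ⟶ Y} {s : Star N X} (hs : IsKernelStar e s)
    (r : Star N X) (hr : r.a ≫ e = r.b ≫ e) : StarLE r s :=
  (hs.2 r hr).exists

theorem IsImageFact.a_eq_b {X Y : C} {f : X ⟶ Y} {s : Star N X} {t : Star N Y}
    (ht : IsImageFact f s t) (hs : s.a ≫ f = s.b ≫ f) : t.a = t.b := by
  obtain ⟨-, p, ⟨hp⟩, hpa, hpb⟩ := ht
  have := hp.epi
  exact (cancel_epi p).mp (by rw [hpa, hpb, hs])

theorem exists_isImageFact_starLE_of_starLE (hN : IsIdealClass N)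
    (hfac : RegEpiMonoFactorisations C) {X Y : C} {f : X ⟶ Y} {r s : Star N X}
    {t : Star N Y} (hrs : StarLE r s) (ht : IsImageFact f s t) :
    ∃ t' : Star N Y, IsImageFact f r t' ∧ StarLE t' t := by
  obtain ⟨m, hma, hmb⟩ := hrs
  obtain ⟨hmono, p, -, hpa, hpb⟩ := ht
  obtain ⟨I, q, j, hq, hj, hqj⟩ := hfac (m ≫ p)
  refine ⟨⟨I, j ≫ t.a, j ≫ t.b, hN.2 j t.a t.ha⟩, ⟨fun W u v hua hub => ?_, q, hq, ?_, ?_⟩,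
    j, rfl, rfl⟩
  · exact (cancel_mono j).mp (hmono _ _ (by simpa using hua) (by simpa using hub))
  · simp only [reassoc_of% hqj, hpa, reassoc_of% hma]
  · simp only [reassoc_of% hqj, hpb, reassoc_of% hmb]

theorem IsDeltaStar.of_starLE {X : C} {d t : Star N X} (hd : IsDeltaStar d) (hdt : StarLE d t)
    (hmono : t.Monic) (hab : t.a = t.b) : IsDeltaStar t := by
  obtain ⟨m, hma, -⟩ := hdt
  refine ⟨hab, by simpa using t.ha, fun L g hg => ?_⟩
  obtain ⟨μ, hμ, -⟩ := hd.2.2 g hg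
  refine ⟨μ ≫ m, by simp only [Category.assoc, hma, hμ], fun ν hν => hmono _ _ ?_ ?_⟩
  · rw [hν, Category.assoc, hma, hμ]
  · rw [← hab, hν, Category.assoc, hma, hμ]

end StarReg

open CategoryTheory CategoryTheory.Limits StarReg in
theorem statement3_general {C : Type u} [Category.{v} C] (N : MorphismProperty C)
    (hN : IsIdealClass N) (hker : HasNKernels N)
    (hfac : RegEpiMonoFactorisations C) :
    (∀ ⦃X Y : C⦄ (f : X ⟶ Y), Nonempty (RegularEpi f) → Saturating N f) ↔
    (∀ ⦃X Y Z : C⦄ (e : X ⟶ Z) (f : X ⟶ Y) (g : Z ⟶ Y),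
      Nonempty (RegularEpi e) → Nonempty (RegularEpi f) → Nonempty (RegularEpi g) →
      e ≫ g = f → RightSaturated N e f g (𝟙 Y)) := by
  constructor
  · rintro hsat X Y Z e f g - hf - rfl s t hs ht
    obtain ⟨d, hd⟩ := exists_isDeltaStar hker X
    obtain ⟨t', ht', ht't⟩ :=
      exists_isImageFact_starLE_of_starLE hN hfac (hs.starLE d (by rw [hd.1])) ht
    have hab : t.a = t.b := ht.a_eq_b (by rw [reassoc_of% hs.1])
    exact (isKernelStar_id_iff_isDeltaStar t).2 ((hsat _ hf d t' hd ht').of_starLE ht't ht.1 hab)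
  · intro hdia X Y f hf s t hs ht
    have hRS := hdia (𝟙 X) f f ⟨RegularEpi.ofIso (Iso.refl X)⟩ hf hf (Category.id_comp f)
    exact (isKernelStar_id_iff_isDeltaStar t).1
      (hRS s t ((isKernelStar_id_iff_isDeltaStar s).2 hs) ht)

open CategoryTheory CategoryTheory.Limits StarReg in
/-- In a regular multi-pointed category, every regular epimorphism is saturating iff every
regular diamond with identity right edge is right saturated. -/
theorem statement3 {C : Type u} [Category.{v} C] (N : MorphismProperty C)
    (hfl : HasFiniteLimits C) (hN : IsIdealClass N) (hker : HasNKernels N)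
    (hfac : RegEpiMonoFactorisations C) (hpb : RegEpisPullbackStable C) :
    (∀ ⦃X Y : C⦄ (f : X ⟶ Y), Nonempty (RegularEpi f) → Saturating N f) ↔
    (∀ ⦃X Y Z : C⦄ (e : X ⟶ Z) (f : X ⟶ Y) (g : Z ⟶ Y),
      Nonempty (RegularEpi e) → Nonempty (RegularEpi f) → Nonempty (RegularEpi g) →
      e ≫ g = f → RightSaturated N e f g (𝟙 Y)) :=
  statement3_general N hN hker hfac
end

section
/- In a star-regular category C, the following are equivalent: (i) C satisfies property (*) — for any kernel star F* ⇉ A with coequaliser f : A → A/F* and any kernel star G* ⇉ A with F* ⊆ G*, the image f(G*) ⇉ A/F* is again a kernel star; (ii) every regular diamond with identity right edge (g = q∘f with f, g, q regular epimorphisms) is left saturated. -/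
open CategoryTheory CategoryTheory.Limits

universe v u

/-!
If `g = q ∘ f` with `f`, `q` regular epimorphisms, the kernel star of `f` lies in that of `g`,
so property (*) makes `f(G*)` a kernel star; since `f` is epi and `g` coequalises `G*`, the
morphism `q` coequalises `f(G*)`, and a kernel star is the kernel star of any of its
coequalisers. Conversely, given `F* ⊆ G*` with `f` the coequaliser of `F*`, factor a morphism
with kernel star `G*` as a regular epimorphism `p` followed by a monomorphism; then `p = v ∘ f`
with `v` a regular epimorphism, and left saturation of the diamond `p = v ∘ f` says exactly that
`f(G*)` is the kernel star of `v`.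
-/

namespace StarReg

variable {C : Type u} [Category.{v} C] {N : MorphismProperty C}

lemma IsStarCoequalizer.nonempty_regularEpi {X Q : C} {s : Star N X} {f : X ⟶ Q}
    (h : IsStarCoequalizer s f) : Nonempty (RegularEpi f) :=
  ⟨{ W := s.T, left := s.a, right := s.b, w := h.1,
     isColimit := Cofork.IsColimit.ofExistsUnique fun c => by simpa using h.2 c.π c.condition }⟩

lemma nonempty_regularEpi_of_comp (hfact : RegEpiMonoFactorisations C) {X Y Z : C}
    (f : X ⟶ Y) (v : Y ⟶ Z) (hfv : Nonempty (RegularEpi (f ≫ v))) :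
    Nonempty (RegularEpi v) := by
  obtain ⟨W, e, m, ⟨he⟩, hm, rfl⟩ := hfact v
  have : IsRegularEpi ((f ≫ e) ≫ m) := ⟨by simpa using hfv⟩
  have : StrongEpi m := strongEpi_of_strongEpi (f ≫ e) m
  have : IsIso m := isIso_of_mono_of_strongEpi m
  exact (MorphismProperty.RespectsIso.postcomp (.regularEpi C) m e ⟨⟨he⟩⟩).regularEpi

lemma StarLE.comp_eq_comp {X Y : C} {s t : Star N X} (hst : StarLE s t) {f : X ⟶ Y}
    (ht : t.a ≫ f = t.b ≫ f) : s.a ≫ f = s.b ≫ f := by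
  obtain ⟨m, hma, hmb⟩ := hst
  rw [← hma, ← hmb, Category.assoc, Category.assoc, ht]

lemma exists_isKernelStar [HasPullbacks C] (hN : HasNKernels N) {X Y : C} (f : X ⟶ Y) :
    ∃ s : Star N X, IsKernelStar f s := by
  obtain ⟨K, k, hk, hkUniv⟩ := hN (pullback.fst f f)
  refine ⟨⟨K, k ≫ pullback.fst f f, k ≫ pullback.snd f f, hk⟩, by simp [pullback.condition],
    fun t ht => ?_⟩
  obtain ⟨μ, hμ, hμUniq⟩ :=
    hkUniv (pullback.lift t.a t.b ht) (by simpa [pullback.lift_fst] using t.ha)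
  refine ⟨μ, ⟨?_, ?_⟩, fun y hy => hμUniq y ?_⟩
  · rw [← Category.assoc, hμ, pullback.lift_fst]
  · rw [← Category.assoc, hμ, pullback.lift_snd]
  · ext
    · simpa [pullback.lift_fst] using hy.1
    · simpa [pullback.lift_snd] using hy.2

namespace IsKernelStar

lemma starLE_of_comp {X Y Z : C} {e : X ⟶ Z} {g : Z ⟶ Y} {E s : Star N X}
    (hE : IsKernelStar e E) (hs : IsKernelStar (e ≫ g) s) : StarLE E s := by
  obtain ⟨m, hm, -⟩ := hs.2 E (by rw [reassoc_of% hE.1])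
  exact ⟨m, hm⟩

lemma of_comp_mono {X Y Z : C} {p : X ⟶ Y} {m : Y ⟶ Z} [Mono m] {s : Star N X}
    (hs : IsKernelStar (p ≫ m) s) : IsKernelStar p s :=
  ⟨(cancel_mono m).1 (by simpa using hs.1),
    fun t ht => hs.2 t (by rw [reassoc_of% ht])⟩

lemma isStarCoequalizer (hN : RegEpisAreStarCoequalizers N) {X Y : C} {f : X ⟶ Y}
    {s : Star N X} (hs : IsKernelStar f s) (hf : Nonempty (RegularEpi f)) :
    IsStarCoequalizer s f := by
  obtain ⟨s₀, hs₀⟩ := hN f hf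
  obtain ⟨u, ⟨hua, hub⟩, -⟩ := hs.2 s₀ hs₀.1
  exact ⟨hs.1, fun W h hh => hs₀.2 h (by rw [← hua, ← hub, Category.assoc, Category.assoc, hh])⟩

lemma of_isStarCoequalizer {X W Q : C} {w : X ⟶ W} {s : Star N X} (hs : IsKernelStar w s)
    {c : X ⟶ Q} (hc : IsStarCoequalizer s c) : IsKernelStar c s := by
  obtain ⟨v, hv, -⟩ := hc.2 w hs.1
  exact ⟨hc.1, fun t ht => hs.2 t (by rw [← hv, reassoc_of% ht])⟩

end IsKernelStar

lemma IsImageFact.isStarCoequalizer {X Y Z : C} {e : X ⟶ Z} {g : Z ⟶ Y} [Epi e]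
    {s : Star N X} {t : Star N Z} (hs : IsStarCoequalizer s (e ≫ g)) (ht : IsImageFact e s t) :
    IsStarCoequalizer t g := by
  obtain ⟨-, q, ⟨hq⟩, hqa, hqb⟩ := ht
  have : Epi q := hq.epi
  have hcomp {W : C} (h : Z ⟶ W) (hh : t.a ≫ h = t.b ≫ h) : s.a ≫ e ≫ h = s.b ≫ e ≫ h := by
    rw [← reassoc_of% hqa, ← reassoc_of% hqb, hh]
  refine ⟨(cancel_epi q).1 ?_, fun W h hh => ?_⟩
  · rw [reassoc_of% hqa, reassoc_of% hqb, hs.1]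
  · obtain ⟨u, hu, huUniq⟩ := hs.2 (e ≫ h) (hcomp h hh)
    exact ⟨u, (cancel_epi e).1 (by simpa using hu),
      fun y (hy : g ≫ y = h) => huUniq y (by simp [hy])⟩

end StarReg

open CategoryTheory CategoryTheory.Limits StarReg in
theorem statement5_general {C : Type u} [Category.{v} C] (N : MorphismProperty C)
    (hfl : HasFiniteLimits C) (hsr : StarRegular N) :
    PropertyStar N ↔
    (∀ ⦃X Y Z : C⦄ (e : X ⟶ Z) (f : X ⟶ Y) (g : Z ⟶ Y),
      Nonempty (RegularEpi e) → Nonempty (RegularEpi f) → Nonempty (RegularEpi g) →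
      e ≫ g = f → LeftSaturated N e f g (𝟙 Y)) := by
  obtain ⟨-, hNK, hfact, -, hsc⟩ := hsr
  constructor
  · rintro hstar X Y Z e f g ⟨he⟩ hf - rfl s t hs ht
    have : Epi e := he.epi
    obtain ⟨E, hE⟩ := exists_isKernelStar hNK e
    obtain ⟨W, w, hw⟩ := hstar E s e hE (hE.isStarCoequalizer hsc ⟨he⟩) ⟨_, _, hs⟩
      (hE.starLE_of_comp hs) t ht
    exact hw.of_isStarCoequalizer (ht.isStarCoequalizer (hs.isStarCoequalizer hsc hf))
  · rintro hsat A Q F G f - hF ⟨W, w, hw⟩ hFG t ht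
    obtain ⟨Z, p, m, hp, hm, rfl⟩ := hfact w
    have hG : IsKernelStar p G := hw.of_comp_mono
    obtain ⟨v, rfl, -⟩ := hF.2 p (hFG.comp_eq_comp hG.1)
    exact ⟨_, _, hsat f _ v hF.nonempty_regularEpi hp (nonempty_regularEpi_of_comp hfact f v hp)
      rfl G t hG ht⟩

open CategoryTheory CategoryTheory.Limits StarReg in
/-- In a star-regular category, property (*) holds iff every regular diamond with identity
right edge is left saturated. -/
theorem statement5 {C : Type u} [Category.{v} C] (N : MorphismProperty C)
    (hfl : HasFiniteLimits C) (hsr : StarRegular N)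
    (hcoeq : HasKernelStarCoequalizers N) :
    PropertyStar N ↔
    (∀ ⦃X Y Z : C⦄ (e : X ⟶ Z) (f : X ⟶ Y) (g : Z ⟶ Y),
      Nonempty (RegularEpi e) → Nonempty (RegularEpi f) → Nonempty (RegularEpi g) →
      e ≫ g = f → LeftSaturated N e f g (𝟙 Y)) :=
  statement5_general N hfl hsr
end

section
/- In a semi-abelian category, for a normal monomorphism (kernel) k : K → A with cokernel f : A → A/K and any monomorphism m : M → A, the inverse image f⁻¹(f(M)) is the supremum of K and M in the lattice of subobjects of A. -/
open CategoryTheory CategoryTheory.Limits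

universe v u

namespace PtReg

variable {C : Type u} [Category.{v} C] [HasZeroMorphisms C]

/-- `k` is a kernel of `f` in the pointed sense. -/
def IsPKernel {K X Y : C} (k : K ⟶ X) (f : X ⟶ Y) : Prop :=
  k ≫ f = 0 ∧ ∀ ⦃L : C⦄ (g : L ⟶ X), g ≫ f = 0 → ∃! u : L ⟶ K, u ≫ k = g

/-- `q` is a cokernel of `k` in the pointed sense. -/
def IsPCokernel {K X Q : C} (k : K ⟶ X) (q : X ⟶ Q) : Prop :=
  k ≫ q = 0 ∧ ∀ ⦃W : C⦄ (h : X ⟶ W), k ≫ h = 0 → ∃! u : Q ⟶ W, q ≫ u = h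

/-- A normal monomorphism: a kernel of some morphism. -/
def IsNormalMonoP {K X : C} (k : K ⟶ X) : Prop :=
  ∃ (Y : C) (f : X ⟶ Y), IsPKernel k f

/-- Every regular epimorphism is a normal epimorphism (a cokernel). -/
def RegEpisAreNormal (C : Type u) [Category.{v} C] [HasZeroMorphisms C] : Prop :=
  ∀ ⦃X Y : C⦄ (f : X ⟶ Y), Nonempty (RegularEpi f) →
    ∃ (K : C) (k : K ⟶ X), IsPCokernel k f

/-- A normal category: pointed regular, every regular epi normal. -/
def NormalCat (C : Type u) [Category.{v} C] [HasZeroMorphisms C] : Prop :=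
  StarReg.RegEpiMonoFactorisations C ∧ StarReg.RegEpisPullbackStable C ∧ RegEpisAreNormal C

/-- An internal equivalence relation. -/
def IsEquivRelPair {R X : C} (r1 r2 : R ⟶ X) : Prop :=
  (∀ ⦃W : C⦄ (u v : W ⟶ R), u ≫ r1 = v ≫ r1 → u ≫ r2 = v ≫ r2 → u = v) ∧
  (∃ d : X ⟶ R, d ≫ r1 = 𝟙 X ∧ d ≫ r2 = 𝟙 X) ∧
  (∃ s : R ⟶ R, s ≫ r1 = r2 ∧ s ≫ r2 = r1) ∧
  (∀ ⦃P : C⦄ (p1 p2 : P ⟶ R), IsPullback p1 p2 r2 r1 →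
    ∃ t : P ⟶ R, t ≫ r1 = p1 ≫ r1 ∧ t ≫ r2 = p2 ≫ r2)

/-- Barr-exactness: every equivalence relation is effective (a kernel pair). -/
def EquivRelsEffective (C : Type u) [Category.{v} C] : Prop :=
  ∀ ⦃R X : C⦄ (r1 r2 : R ⟶ X), IsEquivRelPair r1 r2 →
    ∃ (Y : C) (q : X ⟶ Y), IsPullback r1 r2 q q

/-- Protomodularity in the pointed context: the split short five lemma. -/
def SplitShortFive (C : Type u) [Category.{v} C] [HasZeroMorphisms C] : Prop :=
  ∀ ⦃K A B K' A' B' : C⦄ (k : K ⟶ A) (p : A ⟶ B) (s : B ⟶ A)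
    (k' : K' ⟶ A') (p' : A' ⟶ B') (s' : B' ⟶ A')
    (κ : K ⟶ K') (α : A ⟶ A') (β : B ⟶ B'),
    IsPKernel k p → IsPKernel k' p' → s ≫ p = 𝟙 B → s' ≫ p' = 𝟙 B' →
    k ≫ α = κ ≫ k' → p ≫ β = α ≫ p' → s ≫ α = β ≫ s' →
    IsIso κ → IsIso β → IsIso α

/-- A semi-abelian category: pointed, regular, Barr-exact, protomodular
(with a zero object, finite limits and binary coproducts as instance hypotheses). -/
def SemiAbelianCat (C : Type u) [Category.{v} C] [HasZeroMorphisms C] : Prop :=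
  StarReg.RegEpiMonoFactorisations C ∧ StarReg.RegEpisPullbackStable C ∧
    EquivRelsEffective C ∧ SplitShortFive C

end PtReg

/-!
Every subobject `L` of `A` containing `K` is saturated for `f`, i.e. `L = f⁻¹(f(L))`. The
comparison `u : L ⟶ f⁻¹(f(L))` is a monomorphism through which the kernel of
`f⁻¹(f(L)) ⟶ f(L)` factors and which composes to the regular epimorphism `e : L ⟶ f(L)`.
The kernel pair of `e` and the pullback of `f⁻¹(f(L)) ⟶ f(L)` along `e` are split epimorphisms
over `L` with kernel `K`, so the split short five lemma identifies them; hence the regular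
epimorphism `e*(f⁻¹(f(L))) ⟶ f⁻¹(f(L))` factors through `u`, which is therefore invertible.
Since `f(M) ≤ f(L)`, it follows that `f⁻¹(f(M)) ≤ f⁻¹(f(L)) = L`.
-/

open CategoryTheory CategoryTheory.Limits StarReg

namespace PtReg

variable {C : Type u} [Category.{v} C] [HasZeroMorphisms C]

lemma IsPKernel.of_isPCokernel {K X Q : C} {k : K ⟶ X} {f : X ⟶ Q} (hk : IsNormalMonoP k)
    (hf : IsPCokernel k f) : IsPKernel k f := by
  obtain ⟨_, g, hkg⟩ := hk
  obtain ⟨g', hg', -⟩ := hf.2 g hkg.1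
  refine ⟨hf.1, fun _ h hh => hkg.2 h ?_⟩
  rw [← hg', ← Category.assoc, hh, zero_comp]

lemma IsPKernel.of_comp_mono {K L X B : C} {κ : K ⟶ X} {p : X ⟶ B} (hκ : IsPKernel κ p)
    {u : L ⟶ X} [Mono u] {j : K ⟶ L} (hj : j ≫ u = κ) : IsPKernel j (u ≫ p) := by
  refine ⟨by rw [← Category.assoc, hj, hκ.1], fun _ h hh => ?_⟩
  obtain ⟨t, ht, huniq⟩ := hκ.2 (h ≫ u) (by rw [Category.assoc, hh])
  refine ⟨t, (by rw [← cancel_mono u, Category.assoc, hj, ht] : t ≫ j = h),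
    fun y (hy : y ≫ j = h) => huniq y ?_⟩
  show y ≫ κ = h ≫ u
  rw [← hj, ← Category.assoc, hy]

lemma IsPKernel.of_isPullback {P X Y Z K : C} {fst : P ⟶ X} {snd : P ⟶ Y} {f : X ⟶ Z}
    {g : Y ⟶ Z} (hP : IsPullback fst snd f g) {k : K ⟶ Y} (hk : IsPKernel k g) {ι : K ⟶ P}
    (hι₁ : ι ≫ fst = 0) (hι₂ : ι ≫ snd = k) : IsPKernel ι fst := by
  refine ⟨hι₁, fun _ h hh => ?_⟩
  obtain ⟨t, ht, huniq⟩ := hk.2 (h ≫ snd) (by rw [Category.assoc, ← hP.w, ← Category.assoc,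
    hh, zero_comp])
  refine ⟨t, hP.hom_ext (by rw [Category.assoc, hι₁, comp_zero, hh]) (by rw [Category.assoc,
    hι₂, ht]), fun y (hy : y ≫ ι = h) => huniq y ?_⟩
  show y ≫ k = h ≫ snd
  rw [← hι₂, ← Category.assoc, hy]

theorem isIso_of_mono_of_kernel_factors [HasPullbacks C] (hfive : SplitShortFive C)
    (hstable : RegEpisPullbackStable C) {K X B L : C} {κ : K ⟶ X} {p : X ⟶ B}
    (hκ : IsPKernel κ p) (u : L ⟶ X) [Mono u] {j : K ⟶ L} (hj : j ≫ u = κ)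
    (hup : Nonempty (RegularEpi (u ≫ p))) : IsIso u := by
  have hje : IsPKernel j (u ≫ p) := hκ.of_comp_mono hj
  generalize hue : u ≫ p = e at hup hje
  have hje0 : (0 : K ⟶ L) ≫ e = j ≫ e := by rw [zero_comp, hje.1]
  have hκ0 : (0 : K ⟶ L) ≫ e = κ ≫ p := by rw [zero_comp, hκ.1]
  let γ : pullback e e ⟶ pullback e p :=
    pullback.lift (pullback.fst e e) (pullback.snd e e ≫ u)
      (by rw [Category.assoc, hue, pullback.condition])
  have hγ : IsIso γ :=
    hfive (pullback.lift 0 j hje0) (pullback.fst e e) (pullback.lift (𝟙 L) (𝟙 L) rfl)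
      (pullback.lift 0 κ hκ0) (pullback.fst e p)
      (pullback.lift (𝟙 L) u (by rw [Category.id_comp, hue]))
      (𝟙 K) γ (𝟙 L)
      (.of_isPullback (.of_hasPullback e e) hje (pullback.lift_fst ..) (pullback.lift_snd ..))
      (.of_isPullback (.of_hasPullback e p) hκ (pullback.lift_fst ..) (pullback.lift_snd ..))
      (pullback.lift_fst _ _ _) (pullback.lift_fst _ _ _)
      (by ext <;> simp only [γ, Category.assoc, Category.id_comp, pullback.lift_fst,
        pullback.lift_snd, pullback.lift_snd_assoc, hj])
      (by rw [Category.comp_id, pullback.lift_fst])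
      (by ext <;> simp only [γ, Category.assoc, Category.id_comp, pullback.lift_fst,
        pullback.lift_snd, pullback.lift_snd_assoc])
      inferInstance inferInstance
  obtain ⟨hπ⟩ := hstable _ _ _ _ (IsPullback.of_hasPullback e p).flip hup
  have := isRegularEpi_of_regularEpi hπ
  have hπ_eq : pullback.snd e p = (inv γ ≫ pullback.snd e e) ≫ u := by
    rw [Category.assoc, IsIso.eq_inv_comp, pullback.lift_snd]
  rw [hπ_eq] at this
  have := strongEpi_of_strongEpi (inv γ ≫ pullback.snd e e) u
  exact isIso_of_mono_of_strongEpi u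

theorem isPullback_of_kernel_factors [HasPullbacks C] (hfive : SplitShortFive C)
    (hstable : RegEpisPullbackStable C) {K A Q L I : C}
    {k : K ⟶ A} {f : A ⟶ Q} (hk : IsPKernel k f) {l : L ⟶ A} [Mono l] {jK : K ⟶ L}
    (hjK : jK ≫ l = k) {e : L ⟶ I} {n : I ⟶ Q} [Mono n] (he : Nonempty (RegularEpi e))
    (hfac : e ≫ n = l ≫ f) : IsPullback e l n f := by
  let u : L ⟶ pullback n f := pullback.lift e l hfac
  have : Mono u := mono_of_mono_fac (pullback.lift_snd e l hfac)
  have hjK0 : jK ≫ e = 0 := by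
    rw [← cancel_mono n, Category.assoc, hfac, ← Category.assoc, hjK, hk.1, zero_comp]
  have hk0 : (0 : K ⟶ I) ≫ n = k ≫ f := by rw [zero_comp, hk.1]
  have hu : IsIso u :=
    isIso_of_mono_of_kernel_factors hfive hstable
      (.of_isPullback (.of_hasPullback n f) hk (pullback.lift_fst 0 k hk0)
        (pullback.lift_snd 0 k hk0))
      u (j := jK)
      (by ext <;> simp only [u, Category.assoc, pullback.lift_fst, pullback.lift_snd, hjK0, hjK])
      (by rwa [pullback.lift_fst])
  exact .of_iso_pullback ⟨hfac⟩ (asIso u) (pullback.lift_fst _ _ _) (pullback.lift_snd _ _ _)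

end PtReg

open CategoryTheory CategoryTheory.Limits StarReg PtReg in
theorem statement6_general {C : Type u} [Category.{v} C] [HasZeroMorphisms C]
    (hfl : HasFiniteLimits C) (hsa : SemiAbelianCat C)
    -- the kernel `k` with cokernel `f`
    {K A Q : C} (k : K ⟶ A) (hk : IsNormalMonoP k)
    (f : A ⟶ Q) (hf : IsPCokernel k f)
    -- the monomorphism `m`
    {M : C} (m : M ⟶ A)
    -- the regular image `f(M)`: `m ≫ f = e ≫ n`
    {FM : C} (e : M ⟶ FM) (n : FM ⟶ Q) (he : Nonempty (RegularEpi e)) (hn : Mono n)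
    (hfact : e ≫ n = m ≫ f)
    -- the inverse image `P = f⁻¹(f(M))`
    {P : C} (pI : P ⟶ FM) (pA : P ⟶ A) (hP : IsPullback pI pA n f) :
    Mono pA ∧
    (∃ iK : K ⟶ P, iK ≫ pA = k) ∧
    (∃ iM : M ⟶ P, iM ≫ pA = m) ∧
    (∀ ⦃L : C⦄ (l : L ⟶ A), Mono l →
      (∃ jK : K ⟶ L, jK ≫ l = k) → (∃ jM : M ⟶ L, jM ≫ l = m) →
      ∃ jP : P ⟶ L, jP ≫ l = pA) := by
  have hkf : IsPKernel k f := .of_isPCokernel hk hf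
  refine ⟨hP.mono_snd_of_mono hn, ⟨hP.lift 0 k (by rw [zero_comp, hkf.1]), hP.lift_snd _ _ _⟩,
    ⟨hP.lift e m hfact, hP.lift_snd _ _ _⟩, ?_⟩
  rintro L l hl ⟨jK, hjK⟩ ⟨jM, hjM⟩
  obtain ⟨I, e', n', he', hn', hfac'⟩ := hsa.1 (l ≫ f)
  have hL : IsPullback e' l n' f := isPullback_of_kernel_factors hsa.2.2.2 hsa.2.1 hkf hjK he' hfac'
  -- `f(M) ≤ f(L)`, by the lifting property of the regular epimorphism `e` against `n'`
  have sq : CommSq (jM ≫ e') e n' n :=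
    ⟨by rw [Category.assoc, hfac', ← Category.assoc, hjM, hfact]⟩
  have := isRegularEpi_of_regularEpi he.some
  exact ⟨hL.lift (pI ≫ sq.lift) pA (by rw [Category.assoc, sq.fac_right, hP.w]),
    hL.lift_snd _ _ _⟩

open CategoryTheory CategoryTheory.Limits StarReg PtReg in
/-- In a semi-abelian category, for a kernel `k : K ⟶ A` with cokernel `f` and a mono
`m : M ⟶ A`, the inverse image `f⁻¹(f(M))` is the supremum of `K` and `M` among
subobjects of `A`. -/
theorem statement6 {C : Type u} [Category.{v} C] [HasZeroMorphisms C] [HasZeroObject C]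
    [HasBinaryCoproducts C] (hfl : HasFiniteLimits C) (hsa : SemiAbelianCat C)
    -- the kernel `k` with cokernel `f`
    {K A Q : C} (k : K ⟶ A) (hk : IsNormalMonoP k)
    (f : A ⟶ Q) (hf : IsPCokernel k f)
    -- the monomorphism `m`
    {M : C} (m : M ⟶ A) (hm : Mono m)
    -- the regular image `f(M)`: `m ≫ f = e ≫ n`
    {FM : C} (e : M ⟶ FM) (n : FM ⟶ Q) (he : Nonempty (RegularEpi e)) (hn : Mono n)
    (hfact : e ≫ n = m ≫ f)
    -- the inverse image `P = f⁻¹(f(M))`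
    {P : C} (pI : P ⟶ FM) (pA : P ⟶ A) (hP : IsPullback pI pA n f) :
    Mono pA ∧
    (∃ iK : K ⟶ P, iK ≫ pA = k) ∧
    (∃ iM : M ⟶ P, iM ≫ pA = m) ∧
    (∀ ⦃L : C⦄ (l : L ⟶ A), Mono l →
      (∃ jK : K ⟶ L, jK ≫ l = k) → (∃ jM : M ⟶ L, jM ≫ l = m) →
      ∃ jP : P ⟶ L, jP ≫ l = pA) :=
  statement6_general hfl hsa k hk f hf m e n he hn hfact pI pA hP
end

section
/- (Diamond isomorphism theorem in a star-regular category) Let C be a star-regular category, κ : F* ⇉ A a kernel star with coequaliser f : A → A/F*, and m : M → A a monomorphism. Then there is an isomorphism M / (F* ∩ (M×M))* ≅ (F* ∨ₐ M) / (F* ∩ ((F*∨ₐM)×(F*∨ₐM)))*, where F* ∨ₐ M denotes the asymmetric join f⁻¹(f(M)); both quotients are isomorphic to the image f(M) as subobjects of A/F*. -/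
open CategoryTheory CategoryTheory.Limits

universe v u

/-!
Both `e : M ⟶ f(M)` and the projection `F* ∨ₐ M ⟶ f(M)` (a pullback of the regular epi `f`) are
regular epimorphisms which, followed by the mono `f(M) ⟶ A/F*`, give the restrictions of `f` to
`M` and to `F* ∨ₐ M`. Their kernel stars are therefore the star-inverse images of `F*`, and in a
star-regular category a regular epimorphism is the coequaliser of its kernel star, so both
quotients are `f(M)`.
-/

namespace StarReg

variable {C : Type u} [Category.{v} C] {N : MorphismProperty C}

noncomputable def IsStarCoequalizer.isColimit {X Q : C} {s : Star N X} {q : X ⟶ Q}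
    (h : IsStarCoequalizer s q) : IsColimit (Cofork.ofπ q h.1) :=
  Cofork.IsColimit.ofExistsUnique fun c => h.2 c.π c.condition

noncomputable def IsStarCoequalizer.regularEpi {X Q : C} {s : Star N X} {q : X ⟶ Q}
    (h : IsStarCoequalizer s q) : RegularEpi q :=
  ⟨s.T, s.a, s.b, h.1, h.isColimit⟩

theorem IsStarCoequalizer.exists_iso {X Q₁ Q₂ : C} {s : Star N X} {q₁ : X ⟶ Q₁}
    {q₂ : X ⟶ Q₂} (h₁ : IsStarCoequalizer s q₁) (h₂ : IsStarCoequalizer s q₂) :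
    ∃ i : Q₁ ≅ Q₂, q₁ ≫ i.hom = q₂ :=
  ⟨IsColimit.coconePointUniqueUpToIso h₁.isColimit h₂.isColimit,
    IsColimit.comp_coconePointUniqueUpToIso_hom h₁.isColimit h₂.isColimit
      WalkingParallelPair.one⟩

theorem IsStarPullback.isKernelStar_comp (hN : IsIdealClass N) {X A Q : C} {x : X ⟶ A}
    {f : A ⟶ Q} {F : Star N A} {σ : Star N X} {j : σ.T ⟶ F.T} (hσ : IsStarPullback x F σ j)
    (hF : IsKernelStar f F) : IsKernelStar (x ≫ f) σ := by
  obtain ⟨hσa, hσb, hσuniv⟩ := hσ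
  refine ⟨by rw [reassoc_of% hσa, reassoc_of% hσb, hF.1], fun t ht => ?_⟩
  let tx : Star N A := ⟨t.T, t.a ≫ x, t.b ≫ x, hN.1 _ _ t.ha⟩
  have hF_tx := hF.2 tx (by simpa only [tx, Category.assoc] using ht)
  obtain ⟨w, hwa, hwb⟩ := hF_tx.exists
  obtain ⟨u, ⟨hua, hub, -⟩, -⟩ := hσuniv t w hwa.symm hwb.symm
  refine ⟨u, ⟨hua, hub⟩, fun u' ⟨hu'a, hu'b⟩ => ?_⟩
  have hj : ∀ v : t.T ⟶ σ.T, v ≫ σ.a = t.a → v ≫ σ.b = t.b → v ≫ j = w := fun v hva hvb =>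
    hF_tx.unique (y₂ := w) ⟨by rw [Category.assoc, ← hσa, reassoc_of% hva],
      by rw [Category.assoc, ← hσb, reassoc_of% hvb]⟩ ⟨hwa, hwb⟩
  exact (hσuniv t w hwa.symm hwb.symm).unique ⟨hu'a, hu'b, hj u' hu'a hu'b⟩
    ⟨hua, hub, hj u hua hub⟩

theorem IsKernelStar.of_comp_mono_s8 {X Y Z : C} {g : X ⟶ Y} {n : Y ⟶ Z} [Mono n] {s : Star N X}
    (h : IsKernelStar (g ≫ n) s) : IsKernelStar g s :=
  ⟨(cancel_mono n).1 (by simpa only [Category.assoc] using h.1),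
    fun t ht => h.2 t (by rw [reassoc_of% ht])⟩

theorem IsKernelStar.isStarCoequalizer_s8 (hN : RegEpisAreStarCoequalizers N) {X Y : C}
    {g : X ⟶ Y} (hg : Nonempty (RegularEpi g)) {s : Star N X} (hs : IsKernelStar g s) :
    IsStarCoequalizer s g := by
  obtain ⟨s₀, hs₀⟩ := hN g hg
  refine ⟨hs.1, fun W h hh => hs₀.2 h ?_⟩
  obtain ⟨u, ⟨hua, hub⟩, -⟩ := hs.2 s₀ hs₀.1
  rw [← hua, ← hub, Category.assoc, Category.assoc, hh]

theorem IsStarPullback.isStarCoequalizer_s8 (hsr : StarRegular N) {X A Q Z : C} {x : X ⟶ A}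
    {f : A ⟶ Q} {F : Star N A} {σ : Star N X} {j : σ.T ⟶ F.T} (hσ : IsStarPullback x F σ j)
    (hF : IsKernelStar f F) {g : X ⟶ Z} (hg : Nonempty (RegularEpi g)) {n : Z ⟶ Q} [Mono n]
    (hw : g ≫ n = x ≫ f) : IsStarCoequalizer σ g :=
  IsKernelStar.isStarCoequalizer_s8 hsr.2.2.2.2 hg
    (IsKernelStar.of_comp_mono_s8 (n := n) (hw ▸ hσ.isKernelStar_comp hsr.1 hF))

end StarReg

open CategoryTheory CategoryTheory.Limits StarReg in
theorem statement8_general {C : Type u} [Category.{v} C] (N : MorphismProperty C)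
    (hsr : StarRegular N)
    -- a kernel star `F` on `A` with coequaliser `f : A ⟶ Q`
    {A Q : C} (F : Star N A) (f : A ⟶ Q)
    (hF : IsKernelStar f F) (hf : IsStarCoequalizer F f)
    -- a monomorphism `m : M ⟶ A`
    {M : C} (m : M ⟶ A)
    -- the regular image `f(M)`: `m ≫ f = e ≫ n` with `e` regular epi, `n` mono
    {FM : C} (e : M ⟶ FM) (n : FM ⟶ Q) (he : Nonempty (RegularEpi e)) (hn : Mono n)
    (hfact : e ≫ n = m ≫ f)
    -- the asymmetric join `P = F* ∨ₐ M = f⁻¹(f(M))`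
    {P : C} (pI : P ⟶ FM) (pA : P ⟶ A) (hP : IsPullback pI pA n f)
    -- the restricted star `(F* ∩ (M×M))*` on `M`
    (L : Star N M) (jL : L.T ⟶ F.T) (hL : IsStarPullback m F L jL)
    -- the restricted star `(F* ∩ ((F*∨ₐM)×(F*∨ₐM)))*` on `P`
    (T : Star N P) (jT : T.T ⟶ F.T) (hT : IsStarPullback pA F T jT)
    -- the two quotients
    {QM : C} (qM : M ⟶ QM) (hqM : IsStarCoequalizer L qM)
    {QP : C} (qP : P ⟶ QP) (hqP : IsStarCoequalizer T qP) :
    ∃ (i : QM ≅ QP) (w : QM ⟶ Q) (w' : QP ⟶ Q),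
      Mono w ∧ Mono w' ∧ qM ≫ w = m ≫ f ∧ qP ≫ w' = pA ≫ f ∧ i.hom ≫ w' = w := by
  have := hn
  have hpI : Nonempty (RegularEpi pI) := hsr.2.2.2.1 pI pA n f hP ⟨hf.regularEpi⟩
  obtain ⟨iM, hiM⟩ := hqM.exists_iso (hL.isStarCoequalizer_s8 hsr hF he hfact)
  obtain ⟨iP, hiP⟩ := hqP.exists_iso (hT.isStarCoequalizer_s8 hsr hF hpI hP.w)
  refine ⟨iM ≪≫ iP.symm, iM.hom ≫ n, iP.hom ≫ n, mono_comp _ _, mono_comp _ _,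
    by rw [reassoc_of% hiM, hfact], by rw [reassoc_of% hiP, hP.w], by simp⟩

open CategoryTheory CategoryTheory.Limits StarReg in
/-- Diamond isomorphism theorem in a star-regular category:
`M/(F* ∩ M×M)* ≅ (F* ∨ₐ M)/(F* ∩ (F*∨ₐM)²)*`, both isomorphic to `f(M)` as subobjects
of `A/F*`. -/
theorem statement8 {C : Type u} [Category.{v} C] (N : MorphismProperty C)
    (hfl : HasFiniteLimits C) (hsr : StarRegular N)
    -- a kernel star `F` on `A` with coequaliser `f : A ⟶ Q`
    {A Q : C} (F : Star N A) (f : A ⟶ Q)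
    (hF : IsKernelStar f F) (hf : IsStarCoequalizer F f)
    -- a monomorphism `m : M ⟶ A`
    {M : C} (m : M ⟶ A) (hm : Mono m)
    -- the regular image `f(M)`: `m ≫ f = e ≫ n` with `e` regular epi, `n` mono
    {FM : C} (e : M ⟶ FM) (n : FM ⟶ Q) (he : Nonempty (RegularEpi e)) (hn : Mono n)
    (hfact : e ≫ n = m ≫ f)
    -- the asymmetric join `P = F* ∨ₐ M = f⁻¹(f(M))`
    {P : C} (pI : P ⟶ FM) (pA : P ⟶ A) (hP : IsPullback pI pA n f)
    -- the restricted star `(F* ∩ (M×M))*` on `M`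
    (L : Star N M) (jL : L.T ⟶ F.T) (hL : IsStarPullback m F L jL)
    -- the restricted star `(F* ∩ ((F*∨ₐM)×(F*∨ₐM)))*` on `P`
    (T : Star N P) (jT : T.T ⟶ F.T) (hT : IsStarPullback pA F T jT)
    -- the two quotients
    {QM : C} (qM : M ⟶ QM) (hqM : IsStarCoequalizer L qM)
    {QP : C} (qP : P ⟶ QP) (hqP : IsStarCoequalizer T qP) :
    ∃ (i : QM ≅ QP) (w : QM ⟶ Q) (w' : QP ⟶ Q),
      Mono w ∧ Mono w' ∧ qM ≫ w = m ≫ f ∧ qP ≫ w' = pA ≫ f ∧ i.hom ≫ w' = w :=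
  statement8_general N hsr F f hF hf m e n he hn hfact pI pA hP L jL hL T jT hT qM hqM qP hqP
end

section
/- (Double quotient isomorphism theorem) Let (C, N) be a star-regular category satisfying property (*). For two kernel stars F* ⇉ A and G* ⇉ A with F* ⊆ G*, letting f : A → A/F* and g : A → A/G* be their coequalisers, there is an isomorphism A/G* ≅ (A/F*) / f(G*). -/
open CategoryTheory CategoryTheory.Limits

universe v u

/-! `f ≫ q` is itself a coequaliser of `G*`: a map coequalising `G*` coequalises `F* ⊆ G*`,
so it factors through `f`, and the factor coequalises `f(G*)` because `G* → f(G*)` is epi.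
Both `g` and `f ≫ q` then coequalise the same star, so their codomains are isomorphic. -/

namespace StarReg

variable {C : Type u} [Category.{v} C] {N : MorphismProperty C}

theorem IsStarCoequalizer.epi {X Q : C} {s : Star N X} {f : X ⟶ Q}
    (hf : IsStarCoequalizer s f) : Epi f where
  left_cancellation u u' huu' := by
    have hcoeq : s.a ≫ f ≫ u = s.b ≫ f ≫ u := by rw [reassoc_of% hf.1]
    exact (hf.2 _ hcoeq).unique rfl huu'.symm

theorem IsStarCoequalizer.exists_iso_s10 {X Q Q' : C} {s : Star N X} {f : X ⟶ Q} {f' : X ⟶ Q'}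
    (hf : IsStarCoequalizer s f) (hf' : IsStarCoequalizer s f') :
    ∃ i : Q ≅ Q', f ≫ i.hom = f' := by
  obtain ⟨u, hu, -⟩ := hf.2 f' hf'.1
  obtain ⟨v, hv, -⟩ := hf'.2 f hf.1
  have := hf.epi
  have := hf'.epi
  refine ⟨⟨u, v, ?_, ?_⟩, hu⟩
  · exact (cancel_epi f).1 (by rw [reassoc_of% hu, hv, Category.comp_id])
  · exact (cancel_epi f').1 (by rw [reassoc_of% hv, hu, Category.comp_id])

theorem StarLE.coequalizes {X W : C} {s t : Star N X} (hst : StarLE s t) {h : X ⟶ W}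
    (ht : t.a ≫ h = t.b ≫ h) : s.a ≫ h = s.b ≫ h := by
  obtain ⟨m, hma, hmb⟩ := hst
  rw [← hma, ← hmb, Category.assoc, Category.assoc, ht]

theorem IsImageFact.comp_coequalizes_iff {X Y W : C} {f : X ⟶ Y} {s : Star N X}
    {t : Star N Y} (hst : IsImageFact f s t) (k : Y ⟶ W) :
    s.a ≫ f ≫ k = s.b ≫ f ≫ k ↔ t.a ≫ k = t.b ≫ k := by
  obtain ⟨-, e, ⟨he⟩, hea, heb⟩ := hst
  have := he.epi
  rw [← reassoc_of% hea, ← reassoc_of% heb]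
  exact cancel_epi e

theorem IsStarCoequalizer.comp_of_isImageFact {X Y Q : C} {F G : Star N X} {H : Star N Y}
    {f : X ⟶ Y} {q : Y ⟶ Q} (hf : IsStarCoequalizer F f) (hFG : StarLE F G)
    (hH : IsImageFact f G H) (hq : IsStarCoequalizer H q) :
    IsStarCoequalizer G (f ≫ q) := by
  have := hf.epi
  have := hq.epi
  refine ⟨(hH.comp_coequalizes_iff q).2 hq.1, fun W h hG => ?_⟩
  obtain ⟨k, hk, -⟩ := hf.2 h (hFG.coequalizes hG)
  obtain ⟨l, hl, -⟩ := hq.2 k ((hH.comp_coequalizes_iff k).1 (hk ▸ hG))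
  refine ⟨l, show (f ≫ q) ≫ l = h by rw [Category.assoc, hl, hk], fun l' hl' => ?_⟩
  exact (cancel_epi (f ≫ q)).1 (by rw [hl', Category.assoc, hl, hk])

end StarReg

open CategoryTheory CategoryTheory.Limits StarReg in
theorem statement10_general {C : Type u} [Category.{v} C] (N : MorphismProperty C)
    {A QF QG : C} (F G : Star N A) (hFG : StarLE F G)
    (f : A ⟶ QF) (hfc : IsStarCoequalizer F f)
    (g : A ⟶ QG) (hgc : IsStarCoequalizer G g)
    -- the image star `f(G*)` on `A/F*`
    (H : Star N QF) (hH : IsImageFact f G H)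
    -- the quotient `(A/F*)/f(G*)`
    {QQ : C} (q : QF ⟶ QQ) (hq : IsStarCoequalizer H q) :
    ∃ i : QG ≅ QQ, g ≫ i.hom = f ≫ q :=
  hgc.exists_iso_s10 (hfc.comp_of_isImageFact hFG hH hq)

open CategoryTheory CategoryTheory.Limits StarReg in
/-- Double quotient isomorphism theorem: in a star-regular category with property (*),
for kernel stars `F* ⊆ G*` on `A`, one has `A/G* ≅ (A/F*)/f(G*)`. -/
theorem statement10 {C : Type u} [Category.{v} C] (N : MorphismProperty C)
    (hfl : HasFiniteLimits C) (hsr : StarRegular N) (hps : PropertyStar N)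
    {A QF QG : C} (F G : Star N A) (hFG : StarLE F G)
    (f : A ⟶ QF) (hFk : IsKernelStar f F) (hfc : IsStarCoequalizer F f)
    (g : A ⟶ QG) (hGk : IsKernelStar g G) (hgc : IsStarCoequalizer G g)
    -- the image star `f(G*)` on `A/F*`
    (H : Star N QF) (hH : IsImageFact f G H)
    -- the quotient `(A/F*)/f(G*)`
    {QQ : C} (q : QF ⟶ QQ) (hq : IsStarCoequalizer H q) :
    ∃ i : QG ≅ QQ, g ≫ i.hom = f ≫ q :=
  statement10_general N F G hFG f hfc g hgc H hH q hq
end
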